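/- arXiv:2505.04144 — 2 statements merged into one kernel-verified Lean document; each statement's English description precedes it below -/
import Mathlib

section
/- If T is a tree on at least three vertices, then χ_{μ_i}(T) = χ_μ(T). -/
open SimpleGraph

variable {V W : Type*}

/-- Two vertices of `X` are `X`-visible if some geodesic between them has all
internal vertices outside `X`; `X` is a mutual-visibility set if this holds
for every reachable pair of vertices of `X`. -/
def IsMVSet (G : SimpleGraph V) (X : Set V) : Prop :=
  ∀ x ∈ X, ∀ y ∈ X, x ≠ y → G.Reachable x y →
    ∃ p : G.Walk x y, p.length = G.dist x y ∧
      ∀ z ∈ p.support, z ≠ x → z ≠ y → z ∉ X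

/-- An independent mutual-visibility set. -/
def IsIMVSet (G : SimpleGraph V) (X : Set V) : Prop :=
  (∀ x ∈ X, ∀ y ∈ X, ¬ G.Adj x y) ∧ IsMVSet G X

/-- The mutual-visibility chromatic number: the least `k` such that the vertex
set partitions into `k` mutual-visibility sets. -/
noncomputable def mvChrom (G : SimpleGraph V) : ℕ :=
  sInf {k | ∃ f : V → Fin k, ∀ i, IsMVSet G (f ⁻¹' {i})}

/-- The independent mutual-visibility chromatic number. -/
noncomputable def imvChrom (G : SimpleGraph V) : ℕ :=
  sInf {k | ∃ f : V → Fin k, ∀ i, IsIMVSet G (f ⁻¹' {i})}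

/-- The chromatic number, as a natural number. -/
noncomputable def chromNat (G : SimpleGraph V) : ℕ :=
  sInf {k | G.Colorable k}

/-- The independent mutual-visibility number `μᵢ(G)`. -/
noncomputable def imvNum (G : SimpleGraph V) : ℕ :=
  sSup {n | ∃ s : Finset V, IsIMVSet G ↑s ∧ s.card = n}

/-- The independence number `α(G)`. -/
noncomputable def indepNum (G : SimpleGraph V) : ℕ :=
  sSup {n | ∃ s : Finset V, (∀ x ∈ s, ∀ y ∈ s, ¬ G.Adj x y) ∧ s.card = n}

/-!
In a tree, a mutual-visibility set containing an edge `uv` is `{u, v}` itself: any third vertex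
sees `u` behind `v` or `v` behind `u`. So the non-independent classes of a mutual-visibility
colouring are single edges, and it suffices to recolour such a class `{u, v}` together with any
other class `Y` into two independent mutual-visibility sets. Call `y ∈ Y` shadowed if another
vertex of `Y` lies on the geodesic from `u` (equivalently, from `v`) to `y`. Then `u`, with the
shadowed vertices of `Y` on its own side of `uv` and the unshadowed ones on the side of `v`, is
an independent mutual-visibility set; so is the symmetric set for `v`, and the two partition
`{u, v} ∪ Y`. Doing this for every class turns an optimal mutual-visibility colouring into an
independent one with the same number of colours.
-/
namespace SimpleGraph

variable {G : SimpleGraph V} {u v w x y z m : V}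

def Between (G : SimpleGraph V) (x z y : V) : Prop :=
  G.dist x z + G.dist z y = G.dist x y

theorem Between.symm (h : G.Between x z y) : G.Between y z x := by
  unfold Between at *
  rw [dist_comm, add_comm, dist_comm, h, dist_comm]

theorem Connected.between_trans (hG : G.Connected) (h₁ : G.Between x w z)
    (h₂ : G.Between x z y) : G.Between x w y ∧ G.Between w z y := by
  unfold Between at *
  have := hG.dist_triangle (u := x) (v := w) (w := y)
  have := hG.dist_triangle (u := w) (v := z) (w := y)
  omega

theorem Walk.dist_add_dist_le_length [DecidableEq V] (p : G.Walk x y) (hz : z ∈ p.support) :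
    G.dist x z + G.dist z y ≤ p.length := by
  have := congrArg Walk.length (p.take_spec hz)
  rw [Walk.length_append] at this
  have := dist_le (p.takeUntil z hz)
  have := dist_le (p.dropUntil z hz)
  omega

theorem IsTree.mem_support_of_between (hT : G.IsTree) (h : G.Between x z y) (p : G.Walk x y)
    (hp : p.IsPath) : z ∈ p.support := by
  obtain ⟨q₁, hq₁⟩ := hT.connected.exists_walk_length_eq_dist x z
  obtain ⟨q₂, hq₂⟩ := hT.connected.exists_walk_length_eq_dist z y
  have hq : (q₁.append q₂).IsPath :=
    Walk.isPath_of_length_eq_dist _ (by rw [Walk.length_append, hq₁, hq₂]; exact h)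
  have : p = q₁.append q₂ :=
    congrArg Subtype.val ((hT.isAcyclic.subsingleton_path x y).elim ⟨p, hp⟩ ⟨_, hq⟩)
  simp [this]

theorem IsTree.between_of_between_of_le (hT : G.IsTree) (hz : G.Between x z y)
    (hw : G.Between x w y) (hle : G.dist x z ≤ G.dist x w) : G.Between x z w := by
  classical
  have hG := hT.connected
  obtain ⟨p, hpl⟩ := hG.exists_walk_length_eq_dist x y
  have hp := p.isPath_of_length_eq_dist hpl
  have hws := hT.mem_support_of_between hw p hp
  have hzs := hT.mem_support_of_between hz p hp
  have hsplit := congrArg Walk.length (p.take_spec hws)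
  rw [Walk.length_append] at hsplit
  have := dist_le (p.takeUntil w hws)
  have := dist_le (p.dropUntil w hws)
  rw [← p.take_spec hws, Walk.mem_support_append_iff] at hzs
  unfold Between at *
  rcases hzs with hzs | hzs
  · have := (p.takeUntil w hws).dist_add_dist_le_length hzs
    have := hG.dist_triangle (u := x) (v := z) (w := w)
    omega
  · have := (p.dropUntil w hws).dist_add_dist_le_length hzs
    have hwz : w = z := hG.dist_eq_zero_iff.mp (by omega)
    subst hwz
    simp

theorem IsTree.between_iff_not_between_of_adj (hT : G.IsTree) (hadj : G.Adj u v) (y : V) :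
    G.Between u v y ↔ ¬ G.Between v u y := by
  have := hT.dist_eq_dist_add_one_of_adj y hadj
  have := dist_eq_one_iff_adj.mpr hadj
  have := dist_eq_one_iff_adj.mpr hadj.symm
  unfold Between
  rw [dist_comm (u := y), dist_comm (u := y)] at *
  omega

theorem IsTree.between_of_adj (hT : G.IsTree) (hadj : G.Adj u v) (hm : m ≠ u)
    (h : G.Between u m y) : G.Between v m y := by
  have hG := hT.connected
  have huv := dist_eq_one_iff_adj.mpr hadj
  have hvu := dist_eq_one_iff_adj.mpr hadj.symm
  have hum := hG.pos_dist_of_ne hm.symm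
  by_cases hy : G.Between v u y
  · unfold Between at *
    have := hG.dist_triangle (u := v) (v := u) (w := m)
    have := hG.dist_triangle (u := v) (v := m) (w := y)
    omega
  · have hvy := (hT.between_iff_not_between_of_adj hadj y).mpr hy
    have hvm := hT.between_of_between_of_le hvy h (by omega)
    exact (hG.between_trans hvm h).2

end SimpleGraph

section

variable {G : SimpleGraph V} {X Y : Set V} {u v x y z : V}

theorem isMVSet_of_subsingleton (hX : X.Subsingleton) : IsMVSet G X :=
  fun _ hx _ hy hxy _ => absurd (hX hx hy) hxy

theorem isMVSet_of_forall_not_between (hG : G.Connected)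
    (H : ∀ x ∈ X, ∀ y ∈ X, x ≠ y → ∀ z ∈ X, z ≠ x → z ≠ y →
      ¬ G.Between x z y) : IsMVSet G X := by
  intro x hx y hy hxy _
  obtain ⟨p, hp⟩ := hG.exists_walk_length_eq_dist x y
  refine ⟨p, hp, fun z hz hzx hzy hzX => H x hx y hy hxy z hzX hzx hzy ?_⟩
  classical
  have := p.dist_add_dist_le_length hz
  have := hG.dist_triangle (u := x) (v := z) (w := y)
  unfold Between
  omega

theorem IsMVSet.not_between (hT : G.IsTree) (hX : IsMVSet G X) (hx : x ∈ X) (hy : y ∈ X)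
    (hz : z ∈ X) (hzx : z ≠ x) (hzy : z ≠ y) : ¬ G.Between x z y := by
  intro h
  have hxy : x ≠ y := by
    rintro rfl
    unfold Between at h
    rw [dist_self] at h
    exact hzx (hT.connected.dist_eq_zero_iff.mp (by omega)).symm
  obtain ⟨p, hp, hvis⟩ := hX x hx y hy hxy (hT.connected x y)
  exact hvis z (hT.mem_support_of_between h p (p.isPath_of_length_eq_dist hp)) hzx hzy hz

theorem IsMVSet.subset_pair_of_adj (hT : G.IsTree) (hX : IsMVSet G X) (hu : u ∈ X) (hv : v ∈ X)
    (hadj : G.Adj u v) : X ⊆ {u, v} := by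
  intro w hw
  by_contra hwuv
  simp only [Set.mem_insert_iff, Set.mem_singleton_iff, not_or] at hwuv
  by_cases h : G.Between v u w
  · exact hX.not_between hT hv hw hu hadj.ne (Ne.symm hwuv.1) h
  · exact hX.not_between hT hu hw hv hadj.ne.symm (Ne.symm hwuv.2)
      ((hT.between_iff_not_between_of_adj hadj w).mpr h)

theorem IsMVSet.exists_eq_pair_of_not_isIMVSet (hT : G.IsTree) (hX : IsMVSet G X)
    (h : ¬ IsIMVSet G X) : ∃ u v, G.Adj u v ∧ X = {u, v} := by
  obtain ⟨u, hu, v, hv, hadj⟩ : ∃ u ∈ X, ∃ v ∈ X, G.Adj u v := by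
    by_contra! h'
    exact h ⟨h', hX⟩
  exact ⟨u, v, hadj, (hX.subset_pair_of_adj hT hu hv hadj).antisymm
    (Set.insert_subset hu (Set.singleton_subset_iff.mpr hv))⟩

namespace SimpleGraph

def IsShadowed (G : SimpleGraph V) (Y : Set V) (u y : V) : Prop :=
  ∃ m ∈ Y, m ≠ y ∧ G.Between u m y

/-- `G.Between v u y` says that `y` lies on the side of `u` once the edge `uv` is cut. -/
def shadowSplit (G : SimpleGraph V) (Y : Set V) (u v : V) : Set V :=
  {y ∈ Y | G.IsShadowed Y u y ↔ G.Between v u y}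

theorem IsTree.isShadowed_iff_of_adj (hT : G.IsTree) (hadj : G.Adj u v) (hu : u ∉ Y)
    (hv : v ∉ Y) : G.IsShadowed Y u y ↔ G.IsShadowed Y v y := by
  have key : ∀ {u v}, G.Adj u v → u ∉ Y → G.IsShadowed Y u y → G.IsShadowed Y v y :=
    fun hadj hu ⟨m, hm, hmy, h⟩ =>
      ⟨m, hm, hmy, hT.between_of_adj hadj (ne_of_mem_of_not_mem hm hu) h⟩
  exact ⟨key hadj hu, key hadj.symm hv⟩

theorem IsTree.not_between_of_mem_shadowSplit (hT : G.IsTree) (hadj : G.Adj u v)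
    (hY : IsMVSet G Y) (hx : x ∈ G.shadowSplit Y u v) (hy : y ∈ G.shadowSplit Y u v)
    (hxy : x ≠ y) : ¬ G.Between u x y := by
  intro h
  obtain ⟨hxY, hx⟩ := hx
  obtain ⟨hyY, hy⟩ := hy
  by_cases hxs : G.IsShadowed Y u x
  · obtain ⟨m, hmY, hmx, hm⟩ := hxs
    have hmy : m ≠ y := by
      rintro rfl
      refine hmx (hT.connected.dist_eq_zero_iff.mp ?_).symm
      unfold Between at h hm
      rw [dist_comm (u := m)] at hm
      omega
    exact hY.not_between hT hmY hyY hxY (Ne.symm hmx) hxy (hT.connected.between_trans hm h).2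
  · have hvx := (hT.between_iff_not_between_of_adj hadj x).mpr (mt hx.mpr hxs)
    by_cases hys : G.IsShadowed Y u y
    · exact (hT.between_iff_not_between_of_adj hadj y).mp
        (hT.connected.between_trans hvx h).1 (hy.mp hys)
    · exact hys ⟨x, hxY, hxy, h⟩

theorem IsTree.not_adj_of_mem_shadowSplit (hT : G.IsTree) (hadj : G.Adj u v) (hu : u ∉ Y)
    (hv : v ∉ Y) (hy : y ∈ G.shadowSplit Y u v) : ¬ G.Adj u y := by
  intro huy
  obtain ⟨hyY, hy⟩ := hy
  have hG := hT.connected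
  have h₁ := dist_eq_one_iff_adj.mpr huy
  by_cases hys : G.IsShadowed Y u y
  · obtain ⟨m, hmY, hmy, hm⟩ := hys
    have := hG.pos_dist_of_ne (ne_of_mem_of_not_mem hmY hu).symm
    have := hG.pos_dist_of_ne hmy
    unfold Between at hm
    omega
  · have hvy := (hT.between_iff_not_between_of_adj hadj y).mpr (mt hy.mpr hys)
    have := hG.pos_dist_of_ne (ne_of_mem_of_not_mem hyY hv).symm
    have := dist_eq_one_iff_adj.mpr hadj
    unfold Between at hvy
    omega

theorem IsTree.not_between_left_of_mem_shadowSplit (hT : G.IsTree) (hadj : G.Adj u v)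
    (hY : IsMVSet G Y) (hu : u ∉ Y) (hx : x ∈ G.shadowSplit Y u v)
    (hy : y ∈ G.shadowSplit Y u v) : ¬ G.Between x u y := by
  have hG := hT.connected
  have key : ∀ {x y}, x ∈ Y → y ∈ Y → G.IsShadowed Y u x → ¬ G.Between x u y := by
    rintro x y hxY hyY ⟨m, hmY, hmx, hm⟩ h
    have hmy : m ≠ y := by
      rintro rfl
      refine ne_of_mem_of_not_mem hmY hu (hG.dist_eq_zero_iff.mp ?_).symm
      have := dist_comm (G := G) (u := x) (v := u)
      have := dist_comm (G := G) (u := x) (v := m)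
      unfold Between at h hm
      omega
    exact hY.not_between hT hxY hyY hmY hmx hmy (hG.between_trans hm.symm h).1
  obtain ⟨hxY, hx⟩ := hx
  obtain ⟨hyY, hy⟩ := hy
  by_cases hxs : G.IsShadowed Y u x
  · exact key hxY hyY hxs
  by_cases hys : G.IsShadowed Y u y
  · exact fun h => key hyY hxY hys h.symm
  -- Both lie on the side of `v`, so the detour through `u` is too long.
  have hvx := (hT.between_iff_not_between_of_adj hadj x).mpr (mt hx.mpr hxs)
  have hvy := (hT.between_iff_not_between_of_adj hadj y).mpr (mt hy.mpr hys)
  have := hG.dist_triangle (u := x) (v := v) (w := y)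
  have := dist_eq_one_iff_adj.mpr hadj
  have := dist_comm (G := G) (u := x) (v := u)
  have := dist_comm (G := G) (u := x) (v := v)
  unfold Between at *
  omega

theorem IsTree.isIMVSet_insert_shadowSplit (hT : G.IsTree) (hadj : G.Adj u v)
    (hY : IsMVSet G Y) (hu : u ∉ Y) (hv : v ∉ Y) :
    IsIMVSet G (insert u (G.shadowSplit Y u v)) := by
  refine ⟨?_, isMVSet_of_forall_not_between hT.connected ?_⟩
  · rintro a (rfl | ha) b (rfl | hb) hab
    · exact G.irrefl hab
    · exact hT.not_adj_of_mem_shadowSplit hadj hu hv hb hab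
    · exact hT.not_adj_of_mem_shadowSplit hadj hu hv ha hab.symm
    · by_cases h : G.Between b a u
      · exact hT.not_between_of_mem_shadowSplit hadj hY ha hb hab.ne h.symm
      · exact hT.not_between_of_mem_shadowSplit hadj hY hb ha hab.ne.symm
          ((hT.between_iff_not_between_of_adj hab u).mpr h).symm
  · rintro x hx y hy hxy z (rfl | hz) hzx hzy h
    · exact hT.not_between_left_of_mem_shadowSplit hadj hY hu
        (hx.resolve_left hzx.symm) (hy.resolve_left hzy.symm) h
    rcases hx with rfl | hx
    · exact hT.not_between_of_mem_shadowSplit hadj hY hz (hy.resolve_left hxy.symm) hzy h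
    rcases hy with rfl | hy
    · exact hT.not_between_of_mem_shadowSplit hadj hY hz hx hzx h.symm
    exact hY.not_between hT hx.1 hy.1 hz.1 hzx hzy h

theorem IsTree.insert_insert_diff_insert_shadowSplit (hT : G.IsTree) (hadj : G.Adj u v)
    (hu : u ∉ Y) (hv : v ∉ Y) :
    insert u (insert v Y) \ insert u (G.shadowSplit Y u v) = insert v (G.shadowSplit Y v u) := by
  ext y
  by_cases hyu : y = u
  · subst hyu
    simp [shadowSplit, hadj.ne, hu]
  by_cases hyv : y = v
  · subst hyv
    simp [shadowSplit, hadj.ne.symm, hv]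
  simp only [shadowSplit, Set.mem_sdiff, Set.mem_insert_iff, Set.mem_ofPred_eq, hyu, hyv,
    false_or, hT.isShadowed_iff_of_adj hadj hu hv, hT.between_iff_not_between_of_adj hadj y]
  tauto

end SimpleGraph

theorem exists_recolor {α : Type*} (f : V → α) {i j : α} (hij : i ≠ j) (Z : Set V) :
    ∃ g : V → α, g ⁻¹' {i} = (f ⁻¹' {i} ∪ f ⁻¹' {j}) ∩ Z ∧
      g ⁻¹' {j} = (f ⁻¹' {i} ∪ f ⁻¹' {j}) \ Z ∧
      ∀ l, l ≠ i → l ≠ j → g ⁻¹' {l} = f ⁻¹' {l} := by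
  classical
  refine ⟨fun x => if f x = i ∨ f x = j then if x ∈ Z then i else j else f x, ?_, ?_, ?_⟩
  · ext x; by_cases x ∈ Z <;> grind
  · ext x; by_cases x ∈ Z <;> grind
  · intro l hli hlj; ext x; grind

theorem SimpleGraph.IsTree.exists_recolor_isIMVSet [Fintype V] {α : Type*} (hT : G.IsTree)
    (hn : 3 ≤ Fintype.card V) (f : V → α) (hf : ∀ l, IsMVSet G (f ⁻¹' {l})) (i : α) :
    ∃ g : V → α, (∀ l, IsMVSet G (g ⁻¹' {l})) ∧ IsIMVSet G (g ⁻¹' {i}) ∧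
      ∀ l, IsIMVSet G (f ⁻¹' {l}) → IsIMVSet G (g ⁻¹' {l}) := by
  by_cases hi : IsIMVSet G (f ⁻¹' {i})
  · exact ⟨f, hf, hi, fun _ => id⟩
  obtain ⟨u, v, hadj, hfi⟩ := (hf i).exists_eq_pair_of_not_isIMVSet hT hi
  have hu : u ∈ f ⁻¹' {i} := hfi ▸ Set.mem_insert u {v}
  have hv : v ∈ f ⁻¹' {i} := hfi ▸ Set.mem_insert_of_mem u rfl
  classical
  obtain ⟨w, -, hw⟩ := Finset.exists_mem_notMem_of_card_lt_card
    (s := {u, v}) (t := Finset.univ) ((Finset.card_le_two).trans_lt hn)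
  have hwi : f w ≠ i := fun h => hw (by simpa [hfi] using (show w ∈ f ⁻¹' {i} from h))
  obtain ⟨g, hgi, hgj, hgl⟩ :=
    exists_recolor f hwi.symm (insert u (G.shadowSplit (f ⁻¹' {f w}) u v))
  set Y := f ⁻¹' {f w}
  have huY : u ∉ Y := fun h => hwi (h.symm.trans hu)
  have hvY : v ∉ Y := fun h => hwi (h.symm.trans hv)
  have hW : f ⁻¹' {i} ∪ Y = insert u (insert v Y) := by
    rw [hfi, Set.insert_union, Set.singleton_union]
  rw [hW, Set.inter_eq_right.mpr
    (Set.insert_subset_insert fun y hy => Set.mem_insert_of_mem _ hy.1)] at hgi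
  rw [hW, hT.insert_insert_diff_insert_shadowSplit hadj huY hvY] at hgj
  have hgi' : IsIMVSet G (g ⁻¹' {i}) :=
    hgi ▸ hT.isIMVSet_insert_shadowSplit hadj (hf _) huY hvY
  have hgj' : IsIMVSet G (g ⁻¹' {f w}) :=
    hgj ▸ hT.isIMVSet_insert_shadowSplit hadj.symm (hf _) hvY huY
  have hg : ∀ l, l = i ∨ l = f w ∨ g ⁻¹' {l} = f ⁻¹' {l} := fun l =>
    or_iff_not_imp_left.mpr fun hli => or_iff_not_imp_left.mpr (hgl l hli)
  refine ⟨g, fun l => ?_, hgi', fun l hl => ?_⟩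
  · rcases hg l with rfl | rfl | hgl
    exacts [hgi'.2, hgj'.2, hgl ▸ hf l]
  · rcases hg l with rfl | rfl | hgl
    exacts [hgi', hgj', hgl ▸ hl]

theorem SimpleGraph.IsTree.exists_isIMVSet_coloring [Fintype V] {α : Type*} [Fintype α]
    (hT : G.IsTree) (hn : 3 ≤ Fintype.card V) (f : V → α)
    (hf : ∀ i, IsMVSet G (f ⁻¹' {i})) :
    ∃ g : V → α, ∀ i, IsIMVSet G (g ⁻¹' {i}) := by
  classical
  suffices H : ∀ s : Finset α, ∃ g : V → α,
      (∀ i, IsMVSet G (g ⁻¹' {i})) ∧ ∀ i ∈ s, IsIMVSet G (g ⁻¹' {i}) by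
    obtain ⟨g, -, hg⟩ := H Finset.univ
    exact ⟨g, fun i => hg i (Finset.mem_univ i)⟩
  intro s
  induction s using Finset.induction_on with
  | empty => exact ⟨f, hf, by simp⟩
  | insert i s _ ih =>
    obtain ⟨g, hg, hgs⟩ := ih
    obtain ⟨g', hg', hg'i, hg'g⟩ := hT.exists_recolor_isIMVSet hn g hg i
    refine ⟨g', hg', fun l hl => ?_⟩
    rcases Finset.mem_insert.mp hl with rfl | hl
    exacts [hg'i, hg'g l (hgs l hl)]

end

theorem stmt13 [Fintype V] (G : SimpleGraph V) (hT : G.IsTree)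
    (hn : 3 ≤ Fintype.card V) :
    imvChrom G = mvChrom G := by
  have hsingle : ∀ i, IsMVSet G (Fintype.equivFin V ⁻¹' {i}) := fun _ =>
    isMVSet_of_subsingleton (Set.subsingleton_singleton.preimage (Fintype.equivFin V).injective)
  obtain ⟨f, hf⟩ : mvChrom G ∈ {k | ∃ f : V → Fin k, ∀ i, IsMVSet G (f ⁻¹' {i})} :=
    Nat.sInf_mem ⟨_, _, hsingle⟩
  obtain ⟨g, hg⟩ := hT.exists_isIMVSet_coloring hn f hf
  obtain ⟨g', hg'⟩ :
      imvChrom G ∈ {k | ∃ f : V → Fin k, ∀ i, IsIMVSet G (f ⁻¹' {i})} :=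
    Nat.sInf_mem ⟨_, g, hg⟩
  exact le_antisymm (Nat.sInf_le ⟨g, hg⟩) (Nat.sInf_le ⟨g', fun i => (hg' i).2⟩)
end

section
/- If G is a graph with diameter at most 3, then χ_{μ_i}(G) = χ(G). -/
open SimpleGraph

variable {V W : Type*}

/- An independent set `X` in a graph of diameter at most 3 is already a mutual-visibility set: an
internal vertex of a geodesic of length at most 3 is adjacent to one of its ends, so it cannot lie
in `X`. Hence the colour classes of a proper colouring are independent mutual-visibility sets. -/

namespace SimpleGraph.Walk

variable {G : SimpleGraph V}

lemma adj_or_adj_of_mem_support_of_length_le_three {x y z : V} (p : G.Walk x y)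
    (hp : p.length ≤ 3) (hz : z ∈ p.support) (hzx : z ≠ x) (hzy : z ≠ y) :
    G.Adj x z ∨ G.Adj z y := by
  classical
  have hlen : (p.takeUntil z hz).length + (p.dropUntil z hz).length = p.length := by
    rw [← length_append, take_spec]
  have htake : (p.takeUntil z hz).length ≠ 0 := fun h => hzx (eq_of_length_eq_zero h).symm
  have hdrop : (p.dropUntil z hz).length ≠ 0 := fun h => hzy (eq_of_length_eq_zero h)
  by_cases h : (p.takeUntil z hz).length = 1
  · exact .inl (adj_of_length_eq_one h)
  · exact .inr (adj_of_length_eq_one (p := p.dropUntil z hz) (by omega))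

end SimpleGraph.Walk

lemma isMVSet_of_independent {G : SimpleGraph V} (hdiam : ∀ u v : V, G.dist u v ≤ 3)
    {X : Set V} (hX : ∀ x ∈ X, ∀ y ∈ X, ¬ G.Adj x y) : IsMVSet G X := by
  intro x hx y hy _ hxy
  obtain ⟨p, hp⟩ := hxy.exists_walk_length_eq_dist
  refine ⟨p, hp, fun z hz hzx hzy hzX => ?_⟩
  rcases p.adj_or_adj_of_mem_support_of_length_le_three (hp ▸ hdiam x y) hz hzx hzy with h | h
  · exact hX x hx z hzX h
  · exact hX z hzX y hy h

lemma isIMVSet_iff_of_dist_le_three {G : SimpleGraph V} (hdiam : ∀ u v : V, G.dist u v ≤ 3)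
    {X : Set V} : IsIMVSet G X ↔ ∀ x ∈ X, ∀ y ∈ X, ¬ G.Adj x y :=
  ⟨And.left, fun hX => ⟨hX, isMVSet_of_independent hdiam hX⟩⟩

lemma colorable_iff_exists_independent_fibers (G : SimpleGraph V) (k : ℕ) :
    G.Colorable k ↔ ∃ f : V → Fin k, ∀ i, ∀ x ∈ f ⁻¹' {i}, ∀ y ∈ f ⁻¹' {i}, ¬ G.Adj x y := by
  constructor
  · rintro ⟨C⟩
    exact ⟨C, fun i x hx y hy hxy => C.valid hxy (hx.trans hy.symm)⟩
  · rintro ⟨f, hf⟩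
    exact ⟨Coloring.mk f fun {u v} huv h => hf (f v) u h v rfl huv⟩

theorem stmt14_general (G : SimpleGraph V)
    (hdiam : ∀ u v : V, G.dist u v ≤ 3) :
    imvChrom G = chromNat G := by
  unfold imvChrom chromNat
  congr 1
  ext k
  simp only [Set.mem_ofPred_eq, isIMVSet_iff_of_dist_le_three hdiam,
    colorable_iff_exists_independent_fibers]

theorem stmt14 [Fintype V] (G : SimpleGraph V) (hconn : G.Connected)
    (hdiam : ∀ u v : V, G.dist u v ≤ 3) :
    imvChrom G = chromNat G :=
  stmt14_general G hdiam
end
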